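/- arXiv:1709.02947 — 7 statements merged into one kernel-verified Lean document; each statement's English description precedes it below -/
import Mathlib

section
/- Let $\mathfrak{g}$ be a simple Lie algebra over a field $k$, $V$ a representation of $\mathfrak{g}$, $P : V \times V \to \mathfrak{g}$ a symmetric bilinear map satisfying $P(u,v)(w) + P(v,w)(u) + P(w,u)(v) = 0$ for all $u,v,w \in V$, and let $W \subseteq V$ be a $\mathfrak{g}$-submodule on which $\mathfrak{g}$ acts non-trivially. If $P(V,W) = \{0\}$, then $P \equiv 0$. -/
/-- If `𝔤` is a simple Lie algebra, `V` a representation, `P` a symmetric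
bilinear map `V × V → 𝔤` satisfying relation (1), and `W ⊆ V` a submodule on which `𝔤`
acts non-trivially with `P(V, W) = 0`, then `P ≡ 0`. -/
theorem stmt_2 (k g V : Type*) [Field k] [LieRing g] [LieAlgebra k g]
    [LieAlgebra.IsSimple k g]
    [AddCommGroup V] [Module k V] [LieRingModule g V] [LieModule k g V]
    (P : V →ₗ[k] V →ₗ[k] g) (hPsymm : ∀ u v : V, P u v = P v u)
    (h1 : ∀ u v w : V, ⁅P u v, w⁆ + ⁅P v w, u⁆ + ⁅P w u, v⁆ = 0)
    (W : LieSubmodule k g V)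
    (hWnontriv : ∃ x : g, ∃ w ∈ W, ⁅x, w⁆ ≠ 0)
    (hPVW : ∀ v : V, ∀ w ∈ W, P v w = 0) :
    ∀ u v : V, P u v = 0 := by
  -- The annihilator of W is an ideal
  let I : LieIdeal k g :=
    { carrier := {x : g | ∀ w ∈ W, ⁅x, w⁆ = 0}
      add_mem' := fun {x y} hx hy w hw => by rw [add_lie, hx w hw, hy w hw, add_zero]
      zero_mem' := fun w hw => zero_lie w
      smul_mem' := fun c x hx w hw => by rw [smul_lie, hx w hw, smul_zero]
      lie_mem := fun {y x} hx w hw => by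
        rw [lie_lie, hx w hw, lie_zero, zero_sub, hx _ (W.lie_mem hw), neg_zero] }
  have hInot : I ≠ ⊤ := by
    obtain ⟨x, w, hw, hxw⟩ := hWnontriv
    intro hI
    exact hxw (by have : x ∈ I := hI ▸ LieSubmodule.mem_top x; exact this w hw)
  have hIbot : I = ⊥ := (LieAlgebra.IsSimple.eq_bot_or_eq_top I).resolve_right hInot
  intro u v
  have hmem : P u v ∈ I := by
    intro w hw
    have h := h1 u v w
    rw [hPVW v w hw, hPsymm w u, hPVW u w hw, zero_lie, zero_lie, add_zero, add_zero] at h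
    exact h
  rw [hIbot] at hmem
  exact (LieSubmodule.mem_bot _).mp hmem
end

section
/- Let $\mathfrak{g}$ be a simple Lie algebra, $V$ a representation of $\mathfrak{g}$, $P : V \times V \to \mathfrak{g}$ a symmetric bilinear map satisfying both relations (1) $P(u,v)(w) + P(v,w)(u) + P(w,u)(v) = 0$ and (2) $[x, P(u,v)] = P(x(u),v) + P(u,x(v))$, and $W \subseteq V$ a submodule with $P(W,W) \neq \{0\}$. Then $x(v) \in W$ for all $x \in \mathfrak{g}$ and $v \in V$. -/
/-- If `𝔤` is simple, `V` a representation, `P` symmetric bilinear satisfying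
relations (1) and (2), and `W ⊆ V` a submodule with `P(W,W) ≠ 0`, then `𝔤 ⋅ V ⊆ W`. -/
theorem stmt_3 (k g V : Type*) [Field k] [LieRing g] [LieAlgebra k g]
    [LieAlgebra.IsSimple k g]
    [AddCommGroup V] [Module k V] [LieRingModule g V] [LieModule k g V]
    (P : V →ₗ[k] V →ₗ[k] g) (hPsymm : ∀ u v : V, P u v = P v u)
    (h1 : ∀ u v w : V, ⁅P u v, w⁆ + ⁅P v w, u⁆ + ⁅P w u, v⁆ = 0)
    (h2 : ∀ (x : g) (u v : V), ⁅x, P u v⁆ = P ⁅x, u⁆ v + P u ⁅x, v⁆)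
    (W : LieSubmodule k g V)
    (hPWW : ∃ w ∈ W, ∃ w' ∈ W, P w w' ≠ 0) :
    ∀ (x : g) (v : V), ⁅x, v⁆ ∈ W := by
  classical
  set S : Set g := {x | ∃ u ∈ W, ∃ v ∈ W, P u v = x} with hS
  have hlie : ∀ (y z : g), z ∈ Submodule.span k S → ⁅y, z⁆ ∈ Submodule.span k S := by
    intro y z hz
    induction hz using Submodule.span_induction with
    | mem z hzS =>
      obtain ⟨u, hu, v, hv, rfl⟩ := hzS
      rw [h2]
      exact Submodule.add_mem _
        (Submodule.subset_span ⟨⁅y, u⁆, W.lie_mem hu, v, hv, rfl⟩)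
        (Submodule.subset_span ⟨u, hu, ⁅y, v⁆, W.lie_mem hv, rfl⟩)
    | zero => simpa using Submodule.zero_mem _
    | add a b _ _ ha hb => rw [lie_add]; exact Submodule.add_mem _ ha hb
    | smul c a _ ha => rw [lie_smul]; exact Submodule.smul_mem _ c ha
  let I : LieIdeal k g :=
    { Submodule.span k S with lie_mem := fun {y z} hz => hlie y z hz }
  have hIne : I ≠ ⊥ := by
    obtain ⟨w, hw, w', hw', hne⟩ := hPWW
    intro hbot
    apply hne
    have hmem : P w w' ∈ I := Submodule.subset_span ⟨w, hw, w', hw', rfl⟩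
    rw [hbot] at hmem
    simpa using hmem
  have hItop : I = ⊤ := (LieAlgebra.IsSimple.eq_bot_or_eq_top I).resolve_left hIne
  intro x v
  have hx : x ∈ Submodule.span k S := by
    have hxI : x ∈ I := hItop ▸ LieSubmodule.mem_top x
    exact hxI
  induction hx using Submodule.span_induction with
  | mem z hzS =>
    obtain ⟨u, hu, w, hw, rfl⟩ := hzS
    have he : ⁅P u w, v⁆ = -(⁅P w v, u⁆ + ⁅P v u, w⁆) := by
      rw [eq_neg_iff_add_eq_zero, ← add_assoc]
      exact h1 u w v
    rw [he]
    exact W.neg_mem (W.add_mem (W.lie_mem hu) (W.lie_mem hw))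
  | zero => rw [zero_lie]; exact W.zero_mem
  | add a b _ _ ha hb => rw [add_lie]; exact W.add_mem ha hb
  | smul c a _ ha => rw [smul_lie]; exact W.smul_mem c ha
end

section
/- Let $k$ be a field of characteristic zero, $V$ a finite-dimensional representation of $\mathfrak{sl}(2,k)$, and $W \subseteq V$ the three-dimensional irreducible submodule with basis $\{e_0,e_1,e_2\}$ adapted to an $\mathfrak{sl}(2,k)$-triple $\{E,H,F\}$ (i.e. $H(e_i)=(2-2i)e_i$, $E(e_1)=2e_0$, $E(e_2)=2e_1$, $F(e_0)=e_1$, $F(e_1)=e_2$, $E(e_0)=F(e_2)=0$). Let $P : V \times V \to \mathfrak{sl}(2,k)$ be a symmetric bilinear map satisfying relations (1) and (2) with $P(W,W) = \{0\}$. Then there exists a linear form $\gamma \in V^*$ such that for all $v \in V$: $P(v,e_0) = -\gamma(v)E$, $P(v,e_1) = \gamma(v)H$, $P(v,e_2) = 2\gamma(v)F$. -/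
abbrev sl2 (k : Type*) [Field k] : Type _ := ↥(LieAlgebra.SpecialLinear.sl (Fin 2) k)

/-!
Relation (1) together with `P(W,W) = 0` gives `[P(v,e), e'] + [P(v,e'), e] = 0` for `e, e' ∈ W`.
For `e = e' = eᵢ` it says that `P(v,eᵢ)` centralizes `eᵢ`; as `E, H, F` form a basis of `sl(2,k)`,
the formulas for their action show that these centralizers are `kE`, `kH`, `kF`. The mixed
relations for `(e₀,e₁)` and `(e₁,e₂)` then express the `E`- and `F`-coefficients through the
`H`-coefficient `γ(v)` of `P(v,e₁)`, which is linear in `v`.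
-/

open Module

theorem LieAlgebra.SpecialLinear.finrank_sl (n k : Type*) [Fintype n] [DecidableEq n]
    [Nonempty n] [Field k] : finrank k (sl n k) = Fintype.card n ^ 2 - 1 := by
  have htrace : Function.Surjective (Matrix.traceLinearMap n k k) := fun c ↦
    ⟨Matrix.single (Classical.arbitrary n) (Classical.arbitrary n) c, by simp⟩
  have h := (Matrix.traceLinearMap n k k).finrank_range_add_finrank_ker
  rw [LinearMap.range_eq_top.mpr htrace, finrank_top, finrank_self, finrank_matrix,
    finrank_self] at h
  change finrank k (LinearMap.ker (Matrix.traceLinearMap n k k)) = _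
  rw [sq]
  omega

theorem LinearIndependent.eq_zero_of_triple {k V : Type*} [Ring k] [AddCommGroup V] [Module k V]
    {x y z : V} (hli : LinearIndependent k ![x, y, z]) {a b c : k}
    (h : a • x + b • y + c • z = 0) : a = 0 ∧ b = 0 ∧ c = 0 := by
  have := Fintype.linearIndependent_iff.mp hli ![a, b, c] (by simpa [Fin.sum_univ_three] using h)
  exact ⟨this 0, this 1, this 2⟩

section CyclicPairing

variable {L V : Type*} [LieRing L] [AddCommGroup V] [LieRingModule L V] {P : V → V → L}

theorem lie_apply_add_lie_apply_eq_zero (hsymm : ∀ u v, P u v = P v u)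
    (hcyc : ∀ u v w, ⁅P u v, w⁆ + ⁅P v w, u⁆ + ⁅P w u, v⁆ = 0) {e e' : V} (h : P e e' = 0)
    (v : V) : ⁅P v e, e'⁆ + ⁅P v e', e⁆ = 0 := by
  simpa [h, hsymm e' v] using hcyc v e e'

theorem lie_apply_self_eq_zero [IsAddTorsionFree V] (hsymm : ∀ u v, P u v = P v u)
    (hcyc : ∀ u v w, ⁅P u v, w⁆ + ⁅P v w, u⁆ + ⁅P w u, v⁆ = 0) {e : V} (h : P e e = 0)
    (v : V) : ⁅P v e, e⁆ = 0 := by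
  have := lie_apply_add_lie_apply_eq_zero hsymm hcyc h v
  rw [← two_nsmul] at this
  exact (smul_eq_zero.mp this).resolve_left two_ne_zero

end CyclicPairing

structure IsAdaptedBasis (k : Type*) {L V : Type*} [Field k] [LieRing L] [AddCommGroup V]
    [Module k V] [LieRingModule L V] (E H F : L) (e0 e1 e2 : V) : Prop where
  linearIndependent : LinearIndependent k ![e0, e1, e2]
  lie_H_e0 : ⁅H, e0⁆ = (2 : k) • e0
  lie_H_e1 : ⁅H, e1⁆ = 0
  lie_H_e2 : ⁅H, e2⁆ = (-2 : k) • e2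
  lie_E_e0 : ⁅E, e0⁆ = 0
  lie_E_e1 : ⁅E, e1⁆ = (2 : k) • e0
  lie_E_e2 : ⁅E, e2⁆ = (2 : k) • e1
  lie_F_e0 : ⁅F, e0⁆ = e1
  lie_F_e1 : ⁅F, e1⁆ = e2
  lie_F_e2 : ⁅F, e2⁆ = 0

namespace IsAdaptedBasis

variable {k L V : Type*} [Field k] [NeZero (2 : k)] [LieRing L] [LieAlgebra k L] [AddCommGroup V]
  [Module k V] [LieRingModule L V] [LieModule k L V] {E H F : L} {e0 e1 e2 : V} {a b c : k}

theorem eq_zero_of_lie_e0_eq_zero (h : IsAdaptedBasis k E H F e0 e1 e2)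
    (hx : ⁅a • E + b • H + c • F, e0⁆ = 0) : b = 0 ∧ c = 0 := by
  have hx' : (2 * b) • e0 + c • e1 + (0 : k) • e2 = 0 := by
    rw [← hx]
    simp only [add_lie, smul_lie, h.lie_E_e0, h.lie_H_e0, h.lie_F_e0]
    module
  obtain ⟨h2b, hc, -⟩ := h.linearIndependent.eq_zero_of_triple hx'
  exact ⟨(mul_eq_zero.mp h2b).resolve_left two_ne_zero, hc⟩

theorem eq_zero_of_lie_e1_eq_zero (h : IsAdaptedBasis k E H F e0 e1 e2)
    (hx : ⁅a • E + b • H + c • F, e1⁆ = 0) : a = 0 ∧ c = 0 := by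
  have hx' : (2 * a) • e0 + (0 : k) • e1 + c • e2 = 0 := by
    rw [← hx]
    simp only [add_lie, smul_lie, h.lie_E_e1, h.lie_H_e1, h.lie_F_e1]
    module
  obtain ⟨h2a, -, hc⟩ := h.linearIndependent.eq_zero_of_triple hx'
  exact ⟨(mul_eq_zero.mp h2a).resolve_left two_ne_zero, hc⟩

theorem eq_zero_of_lie_e2_eq_zero (h : IsAdaptedBasis k E H F e0 e1 e2)
    (hx : ⁅a • E + b • H + c • F, e2⁆ = 0) : a = 0 ∧ b = 0 := by
  have hx' : (0 : k) • e0 + (2 * a) • e1 + (-2 * b) • e2 = 0 := by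
    rw [← hx]
    simp only [add_lie, smul_lie, h.lie_E_e2, h.lie_H_e2, h.lie_F_e2]
    module
  obtain ⟨-, h2a, h2b⟩ := h.linearIndependent.eq_zero_of_triple hx'
  exact ⟨(mul_eq_zero.mp h2a).resolve_left two_ne_zero,
    (mul_eq_zero.mp h2b).resolve_left (neg_ne_zero.mpr two_ne_zero)⟩

theorem linearIndependent_triple (h : IsAdaptedBasis k E H F e0 e1 e2) :
    LinearIndependent k ![E, H, F] := by
  refine Fintype.linearIndependent_iff.mpr fun g hg ↦ ?_
  replace hg : g 0 • E + g 1 • H + g 2 • F = 0 := by simpa [Fin.sum_univ_three] using hg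
  obtain ⟨hH, hF⟩ := h.eq_zero_of_lie_e0_eq_zero (by rw [hg, zero_lie])
  obtain ⟨hE, -⟩ := h.eq_zero_of_lie_e1_eq_zero (by rw [hg, zero_lie])
  intro i
  fin_cases i <;> assumption

noncomputable def basis (h : IsAdaptedBasis k E H F e0 e1 e2) (hL : finrank k L = 3) :
    Basis (Fin 3) k L :=
  basisOfLinearIndependentOfCardEqFinrank h.linearIndependent_triple (by simp [hL])

theorem eq_coord_smul_add (h : IsAdaptedBasis k E H F e0 e1 e2) (hL : finrank k L = 3) (x : L) :
    x = (h.basis hL).coord 0 x • E + (h.basis hL).coord 1 x • H + (h.basis hL).coord 2 x • F := by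
  simpa [basis, Fin.sum_univ_three] using ((h.basis hL).sum_repr x).symm

theorem eq_coord_smul_E_of_lie_e0_eq_zero (h : IsAdaptedBasis k E H F e0 e1 e2)
    (hL : finrank k L = 3) {x : L} (hx : ⁅x, e0⁆ = 0) : x = (h.basis hL).coord 0 x • E := by
  have hdecomp := h.eq_coord_smul_add hL x
  obtain ⟨hH, hF⟩ := h.eq_zero_of_lie_e0_eq_zero (hdecomp ▸ hx)
  rwa [hH, hF, zero_smul, zero_smul, add_zero, add_zero] at hdecomp

theorem eq_coord_smul_H_of_lie_e1_eq_zero (h : IsAdaptedBasis k E H F e0 e1 e2)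
    (hL : finrank k L = 3) {x : L} (hx : ⁅x, e1⁆ = 0) : x = (h.basis hL).coord 1 x • H := by
  have hdecomp := h.eq_coord_smul_add hL x
  obtain ⟨hE, hF⟩ := h.eq_zero_of_lie_e1_eq_zero (hdecomp ▸ hx)
  rwa [hE, hF, zero_smul, zero_smul, zero_add, add_zero] at hdecomp

theorem eq_coord_smul_F_of_lie_e2_eq_zero (h : IsAdaptedBasis k E H F e0 e1 e2)
    (hL : finrank k L = 3) {x : L} (hx : ⁅x, e2⁆ = 0) : x = (h.basis hL).coord 2 x • F := by
  have hdecomp := h.eq_coord_smul_add hL x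
  obtain ⟨hE, hH⟩ := h.eq_zero_of_lie_e2_eq_zero (hdecomp ▸ hx)
  rwa [hE, hH, zero_smul, zero_smul, zero_add, zero_add] at hdecomp

theorem eq_smul_of_lie_eq_zero (h : IsAdaptedBasis k E H F e0 e1 e2) (hL : finrank k L = 3)
    {x0 x1 x2 : L} (h0 : ⁅x0, e0⁆ = 0) (h1 : ⁅x1, e1⁆ = 0) (h2 : ⁅x2, e2⁆ = 0)
    (h01 : ⁅x0, e1⁆ + ⁅x1, e0⁆ = 0) (h12 : ⁅x1, e2⁆ + ⁅x2, e1⁆ = 0) :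
    x0 = (-(h.basis hL).coord 1 x1) • E ∧ x1 = (h.basis hL).coord 1 x1 • H ∧
      x2 = (2 * (h.basis hL).coord 1 x1) • F := by
  set β := (h.basis hL).coord 1 x1
  have hx0 := h.eq_coord_smul_E_of_lie_e0_eq_zero hL h0
  have hx1 : x1 = β • H := h.eq_coord_smul_H_of_lie_e1_eq_zero hL h1
  have hx2 := h.eq_coord_smul_F_of_lie_e2_eq_zero hL h2
  set α := (h.basis hL).coord 0 x0
  set γ := (h.basis hL).coord 2 x2
  have hα : 2 * (α + β) = 0 := by
    refine (h.linearIndependent.eq_zero_of_triple (b := 0) (c := 0) ?_).1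
    rw [← h01, hx0, hx1]
    simp only [smul_lie, h.lie_E_e1, h.lie_H_e0]
    module
  have hγ : γ - 2 * β = 0 := by
    refine (h.linearIndependent.eq_zero_of_triple (a := 0) (b := 0) ?_).2.2
    rw [← h12, hx1, hx2]
    simp only [smul_lie, h.lie_H_e2, h.lie_F_e1]
    module
  refine ⟨?_, hx1, ?_⟩
  · rw [hx0, eq_neg_of_add_eq_zero_left ((mul_eq_zero.mp hα).resolve_left two_ne_zero)]
  · rw [hx2, sub_eq_zero.mp hγ]

end IsAdaptedBasis

theorem stmt_12_general (k V : Type*) [Field k] [CharZero k]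
    [AddCommGroup V] [Module k V] [LieRingModule (sl2 k) V] [LieModule k (sl2 k) V]
    (E H F : sl2 k)
    (e0 e1 e2 : V)
    (hindep : LinearIndependent k ![e0, e1, e2])
    (hHe0 : ⁅H, e0⁆ = (2 : k) • e0) (hHe1 : ⁅H, e1⁆ = 0) (hHe2 : ⁅H, e2⁆ = (-2 : k) • e2)
    (hEe0 : ⁅E, e0⁆ = 0) (hEe1 : ⁅E, e1⁆ = (2 : k) • e0) (hEe2 : ⁅E, e2⁆ = (2 : k) • e1)
    (hFe0 : ⁅F, e0⁆ = e1) (hFe1 : ⁅F, e1⁆ = e2) (hFe2 : ⁅F, e2⁆ = 0)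
    (P : V →ₗ[k] V →ₗ[k] sl2 k) (hPsymm : ∀ u v : V, P u v = P v u)
    (h1 : ∀ u v w : V, ⁅P u v, w⁆ + ⁅P v w, u⁆ + ⁅P w u, v⁆ = 0)
    (hPWW : ∀ u ∈ Submodule.span k {e0, e1, e2}, ∀ v ∈ Submodule.span k {e0, e1, e2},
      P u v = 0) :
    ∃ γ : V →ₗ[k] k, ∀ v : V,
      P v e0 = (-(γ v)) • E ∧ P v e1 = γ v • H ∧ P v e2 = (2 * γ v) • F := by
  have hW : IsAdaptedBasis k E H F e0 e1 e2 :=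
    ⟨hindep, hHe0, hHe1, hHe2, hEe0, hEe1, hEe2, hFe0, hFe1, hFe2⟩
  have hL : finrank k (sl2 k) = 3 := by simp [LieAlgebra.SpecialLinear.finrank_sl]
  have : IsAddTorsionFree V := .of_isTorsionFree k V
  have he0 : e0 ∈ Submodule.span k {e0, e1, e2} := Submodule.subset_span (by simp)
  have he1 : e1 ∈ Submodule.span k {e0, e1, e2} := Submodule.subset_span (by simp)
  have he2 : e2 ∈ Submodule.span k {e0, e1, e2} := Submodule.subset_span (by simp)
  refine ⟨(hW.basis hL).coord 1 ∘ₗ P.flip e1, fun v ↦ ?_⟩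
  exact hW.eq_smul_of_lie_eq_zero hL
    (lie_apply_self_eq_zero hPsymm h1 (hPWW e0 he0 e0 he0) v)
    (lie_apply_self_eq_zero hPsymm h1 (hPWW e1 he1 e1 he1) v)
    (lie_apply_self_eq_zero hPsymm h1 (hPWW e2 he2 e2 he2) v)
    (lie_apply_add_lie_apply_eq_zero hPsymm h1 (hPWW e0 he0 e1 he1) v)
    (lie_apply_add_lie_apply_eq_zero hPsymm h1 (hPWW e1 he1 e2 he2) v)

/-- Over a field of characteristic zero, let `V` be a finite-dimensional
representation of `sl(2,k)` and `W = span{e₀,e₁,e₂} ⊆ V` the three-dimensional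
irreducible submodule adapted to an `sl(2,k)`-triple `{E,H,F}`. If `P : V × V → sl(2,k)`
is symmetric bilinear, satisfies relations (1) and (2), and `P(W,W) = 0`, then there is a
linear form `γ ∈ V*` with `P(v,e₀) = -γ(v)E`, `P(v,e₁) = γ(v)H`, `P(v,e₂) = 2γ(v)F`
for all `v ∈ V`. -/
theorem stmt_12 (k V : Type*) [Field k] [CharZero k]
    [AddCommGroup V] [Module k V] [LieRingModule (sl2 k) V] [LieModule k (sl2 k) V]
    [FiniteDimensional k V]
    (E H F : sl2 k)
    (hEF : ⁅E, F⁆ = H) (hHE : ⁅H, E⁆ = (2 : k) • E) (hHF : ⁅H, F⁆ = (-2 : k) • F)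
    (e0 e1 e2 : V)
    (hindep : LinearIndependent k ![e0, e1, e2])
    (hsub : ∃ W : LieSubmodule k (sl2 k) V,
      (W : Submodule k V) = Submodule.span k {e0, e1, e2})
    (hHe0 : ⁅H, e0⁆ = (2 : k) • e0) (hHe1 : ⁅H, e1⁆ = 0) (hHe2 : ⁅H, e2⁆ = (-2 : k) • e2)
    (hEe0 : ⁅E, e0⁆ = 0) (hEe1 : ⁅E, e1⁆ = (2 : k) • e0) (hEe2 : ⁅E, e2⁆ = (2 : k) • e1)
    (hFe0 : ⁅F, e0⁆ = e1) (hFe1 : ⁅F, e1⁆ = e2) (hFe2 : ⁅F, e2⁆ = 0)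
    (P : V →ₗ[k] V →ₗ[k] sl2 k) (hPsymm : ∀ u v : V, P u v = P v u)
    (h1 : ∀ u v w : V, ⁅P u v, w⁆ + ⁅P v w, u⁆ + ⁅P w u, v⁆ = 0)
    (h2 : ∀ (x : sl2 k) (u v : V), ⁅x, P u v⁆ = P ⁅x, u⁆ v + P u ⁅x, v⁆)
    (hPWW : ∀ u ∈ Submodule.span k {e0, e1, e2}, ∀ v ∈ Submodule.span k {e0, e1, e2},
      P u v = 0) :
    ∃ γ : V →ₗ[k] k, ∀ v : V,
      P v e0 = (-(γ v)) • E ∧ P v e1 = γ v • H ∧ P v e2 = (2 * γ v) • F :=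
  stmt_12_general k V E H F e0 e1 e2 hindep hHe0 hHe1 hHe2 hEe0 hEe1 hEe2 hFe0 hFe1 hFe2 P hPsymm h1
    hPWW
end

section
/- Let $k$ be a field of characteristic $p > 3$, and let $W$ be a finite-dimensional irreducible representation of $\mathfrak{sl}(2,k)$ possessing a basis $e_0, \dots, e_m$ and an $\mathfrak{sl}(2,k)$-triple $\{E,H,F\}$ with $H(e_i) = (\alpha - 2i)e_i$, $E(e_0)=0$, $E(e_i) = i(\alpha - i + 1)e_{i-1}$, $F(e_i)=e_{i+1}$ for $i < m$, $F(e_m) = \beta e_0$, where $\alpha \in k$ is not in the prime field $\mathbb{F}_p \subseteq k$. Then any symmetric bilinear map $P : W \times W \to \mathfrak{sl}(2,k)$ satisfying $[x, P(u,v)] = P(x(u),v) + P(u,x(v))$ for all $x \in \mathfrak{sl}(2,k)$, $u,v \in W$ is identically zero. -/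
lemma sl2_finrank (k : Type*) [Field k] : Module.finrank k (sl2 k) = 3 := by
  have hsurj : LinearMap.range (Matrix.traceLinearMap (Fin 2) k k) = ⊤ := by
    rw [LinearMap.range_eq_top]
    intro c
    exact ⟨Matrix.single 0 0 c, by simp [Matrix.traceLinearMap]⟩
  have h := (Matrix.traceLinearMap (Fin 2) k k).finrank_range_add_finrank_ker
  rw [hsurj, Module.finrank_matrix] at h
  simp [Module.finrank_self] at h
  show Module.finrank k (LinearMap.ker (Matrix.traceLinearMap (Fin 2) k k)) = 3
  omega

set_option maxHeartbeats 2000000 in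
/-- Let `k` have characteristic `p > 3` and let `W` be a finite-dimensional
irreducible representation of `sl(2,k)` with basis `e₀,…,e_m` adapted to an
`sl(2,k)`-triple `{E,H,F}` with parameters `α, β`, where `α` is not in the prime field
(i.e. not an integer in `k`). Then any symmetric bilinear `P : W × W → sl(2,k)`
satisfying relation (2) is identically zero. -/
theorem stmt_13 (k W : Type*) [Field k] (p : ℕ) [Fact p.Prime] [CharP k p] (hp : 3 < p)
    [AddCommGroup W] [Module k W] [LieRingModule (sl2 k) W] [LieModule k (sl2 k) W]
    [LieModule.IsIrreducible k (sl2 k) W]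
    (m : ℕ) (e : ℕ → W)
    (hindep : LinearIndependent k fun i : Fin (m + 1) => e i)
    (hspan : Submodule.span k (Set.range fun i : Fin (m + 1) => e i) = ⊤)
    (E H F : sl2 k) (α β : k)
    (hα : ∀ n : ℤ, (n : k) ≠ α)
    (hEF : ⁅E, F⁆ = H) (hHE : ⁅H, E⁆ = (2 : k) • E) (hHF : ⁅H, F⁆ = (-2 : k) • F)
    (hH : ∀ i ≤ m, ⁅H, e i⁆ = (α - 2 * (i : k)) • e i)
    (hE0 : ⁅E, e 0⁆ = 0)
    (hE : ∀ i, 1 ≤ i → i ≤ m → ⁅E, e i⁆ = ((i : k) * (α - ((i : k) - 1))) • e (i - 1))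
    (hF : ∀ i < m, ⁅F, e i⁆ = e (i + 1))
    (hFm : ⁅F, e m⁆ = β • e 0)
    (P : W →ₗ[k] W →ₗ[k] sl2 k) (hPsymm : ∀ u v : W, P u v = P v u)
    (h2 : ∀ (x : sl2 k) (u v : W), ⁅x, P u v⁆ = P ⁅x, u⁆ v + P u ⁅x, v⁆) :
    ∀ u v : W, P u v = 0 := by
  -- basic characteristic facts
  have h2k : (2 : k) ≠ 0 := by
    intro h
    have h2' : ((2 : ℕ) : k) = 0 := by exact_mod_cast h
    have := (CharP.cast_eq_zero_iff k p 2).mp h2'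
    have := Nat.le_of_dvd (by norm_num) this
    omega
  have h4k : (4 : k) ≠ 0 := by
    have h : (4 : k) = 2 * 2 := by norm_num
    rw [h]; exact mul_ne_zero h2k h2k
  have h8k : (8 : k) ≠ 0 := by
    have h : (8 : k) = 2 * 4 := by norm_num
    rw [h]; exact mul_ne_zero h2k h4k
  -- e 0 ≠ 0
  have he0 : e 0 ≠ 0 := by
    have := hindep.ne_zero ⟨0, Nat.succ_pos m⟩
    simpa using this
  -- H ≠ 0
  have hHne : H ≠ 0 := by
    intro h
    have h0 := hH 0 (Nat.zero_le m)
    rw [h, zero_lie] at h0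
    rcases smul_eq_zero.mp h0.symm with h' | h'
    · simp at h'
      exact hα 0 (by push_cast; exact h'.symm)
    · exact he0 h'
  have hEne : E ≠ 0 := by
    intro h; rw [h, zero_lie] at hEF; exact hHne hEF.symm
  have hFne : F ≠ 0 := by
    intro h; rw [h, lie_zero] at hEF; exact hHne hEF.symm
  -- linear independence of E, H, F
  have hind3 : ∀ a b c : k, a • E + b • H + c • F = 0 → a = 0 ∧ b = 0 ∧ c = 0 := by
    intro a b c h
    have h1 : (2 * a) • E + (-2 * c) • F = 0 := by
      have h' := congrArg (fun X => ⁅H, X⁆) h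
      simp only [lie_add, lie_smul, hHE, hHF, lie_self, smul_zero, lie_zero] at h'
      rw [show (a • ((2:k) • E) + 0 + c • ((-2:k) • F)) = (2 * a) • E + (-2 * c) • F by
        module] at h'
      exact h'
    have h1' : (4 * a) • E + (4 * c) • F = 0 := by
      have h' := congrArg (fun X => ⁅H, X⁆) h1
      simp only [lie_add, lie_smul, hHE, hHF, lie_zero] at h'
      rw [show ((2 * a) • ((2:k) • E) + (-2 * c) • ((-2:k) • F)) =
          (4 * a) • E + (4 * c) • F by module] at h'
      exact h'
    have h3 : (8 * a) • E = 0 := by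
      have key : (8 * a) • E =
          (2 : k) • ((2 * a) • E + (-2 * c) • F) + ((4 * a) • E + (4 * c) • F) := by
        module
      rw [h1, h1', smul_zero, zero_add] at key
      exact key
    have ha : a = 0 := by
      rcases smul_eq_zero.mp h3 with h' | h'
      · rcases mul_eq_zero.mp h' with h'' | h''
        · exact absurd h'' h8k
        · exact h''
      · exact absurd h' hEne
    have hc : c = 0 := by
      rw [ha, mul_zero, zero_smul, zero_add] at h1
      rcases smul_eq_zero.mp h1 with h' | h'
      · rcases mul_eq_zero.mp h' with h'' | h''
        · exact absurd (by linear_combination -h'') h2k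
        · exact h''
      · exact absurd h' hFne
    have hb : b = 0 := by
      rw [ha, hc, zero_smul, zero_smul, zero_add, add_zero] at h
      rcases smul_eq_zero.mp h with h' | h'
      · exact h'
      · exact absurd h' hHne
    exact ⟨ha, hb, hc⟩
  -- span of E, H, F is everything
  have hindEHF : LinearIndependent k ![E, H, F] := by
    rw [Fintype.linearIndependent_iff]
    intro g hg
    rw [Fin.sum_univ_three] at hg
    simp only [Matrix.cons_val_zero, Matrix.cons_val_one, Matrix.head_cons,
      Matrix.cons_val_two, Matrix.tail_cons] at hg
    obtain ⟨h0, h1, h2'⟩ := hind3 _ _ _ hg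
    intro i; fin_cases i <;> assumption
  have hspan3 : Submodule.span k (Set.range ![E, H, F]) = ⊤ :=
    hindEHF.span_eq_top_of_card_eq_finrank (by simp [sl2_finrank])
  -- eigenvector lemma
  have key : ∀ (X : sl2 k) (c : k), ⁅H, X⁆ = c • X → c ≠ 0 → c ≠ 2 → c ≠ -2 → X = 0 := by
    intro X c hX hc0 hc2 hc2'
    have hXmem : X ∈ Submodule.span k (Set.range ![E, H, F]) := by
      rw [hspan3]; trivial
    obtain ⟨g, hg⟩ := (Submodule.mem_span_range_iff_exists_fun k).mp hXmem
    rw [Fin.sum_univ_three] at hg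
    simp only [Matrix.cons_val_zero, Matrix.cons_val_one, Matrix.head_cons,
      Matrix.cons_val_two, Matrix.tail_cons] at hg
    have hb : ⁅H, X⁆ = (2 * g 0) • E + (0 : k) • H + (-2 * g 2) • F := by
      rw [← hg]
      simp only [lie_add, lie_smul, hHE, hHF, lie_self, smul_zero]
      module
    have hcX : c • X = (c * g 0) • E + (c * g 1) • H + (c * g 2) • F := by
      rw [← hg]; module
    have h' : (2 * g 0) • E + (0 : k) • H + (-2 * g 2) • F
        = (c * g 0) • E + (c * g 1) • H + (c * g 2) • F := hb.symm.trans (hX.trans hcX)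
    have heq : ((2 - c) * g 0) • E + (0 - c * g 1) • H + ((-2 - c) * g 2) • F = 0 := by
      have hdiff : ((2 - c) * g 0) • E + (0 - c * g 1) • H + ((-2 - c) * g 2) • F =
          ((2 * g 0) • E + (0 : k) • H + (-2 * g 2) • F)
          - ((c * g 0) • E + (c * g 1) • H + (c * g 2) • F) := by module
      rw [hdiff, h', sub_self]
    obtain ⟨ha, hbz, hcz⟩ := hind3 _ _ _ heq
    have hg0 : g 0 = 0 := by
      rcases mul_eq_zero.mp ha with h'' | h''
      · exact absurd (by linear_combination -h'') hc2
      · exact h''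
    have hg1 : g 1 = 0 := by
      rw [zero_sub, neg_eq_zero] at hbz
      rcases mul_eq_zero.mp hbz with h'' | h''
      · exact absurd h'' hc0
      · exact h''
    have hg2 : g 2 = 0 := by
      rcases mul_eq_zero.mp hcz with h'' | h''
      · exact absurd (by linear_combination -h'') hc2'
      · exact h''
    rw [← hg, hg0, hg1, hg2]
    simp
  -- P vanishes on basis pairs
  have hPij : ∀ i ≤ m, ∀ j ≤ m, P (e i) (e j) = 0 := by
    intro i hi j hj
    apply key _ (2 * α - 2 * (i : k) - 2 * (j : k))
    · rw [h2 H, hH i hi, hH j hj]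
      simp only [map_smul, LinearMap.smul_apply, LinearMap.map_smul]
      module
    · intro h
      apply hα ((i : ℤ) + (j : ℤ))
      push_cast
      have h2inv : (2 : k) * (2 : k)⁻¹ = 1 := mul_inv_cancel₀ h2k
      linear_combination (-(2:k)⁻¹) * h + (α - (i:k) - (j:k)) * h2inv
    · intro h
      apply hα ((i : ℤ) + (j : ℤ) + 1)
      push_cast
      have h2inv : (2 : k) * (2 : k)⁻¹ = 1 := mul_inv_cancel₀ h2k
      linear_combination (-(2:k)⁻¹) * h + (α - (i:k) - (j:k) - 1) * h2inv
    · intro h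
      apply hα ((i : ℤ) + (j : ℤ) - 1)
      push_cast
      have h2inv : (2 : k) * (2 : k)⁻¹ = 1 := mul_inv_cancel₀ h2k
      linear_combination (-(2:k)⁻¹) * h + (α - (i:k) - (j:k) + 1) * h2inv
  -- extend to all of W
  have hP1 : ∀ j ≤ m, ∀ u : W, P u (e j) = 0 := by
    intro j hj u
    have hu : u ∈ Submodule.span k (Set.range fun i : Fin (m + 1) => e i) := by
      rw [hspan]; trivial
    induction hu using Submodule.span_induction with
    | mem x hx =>
      obtain ⟨i, rfl⟩ := hx
      exact hPij i (by omega) j hj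
    | zero => simp
    | add x y _ _ hx hy => simp [hx, hy]
    | smul c x _ hx => simp [hx]
  intro u v
  have hv : v ∈ Submodule.span k (Set.range fun i : Fin (m + 1) => e i) := by
    rw [hspan]; trivial
  induction hv using Submodule.span_induction with
  | mem x hx =>
    obtain ⟨i, rfl⟩ := hx
    exact hP1 i (by omega) u
  | zero => simp
  | add x y _ _ hx hy => simp [hx, hy]
  | smul c x _ hx => simp [hx]
end

section
/- Let $k$ be a field of characteristic zero. Let $\mathfrak{g} = \mathfrak{sl}(2,k) \oplus \mathfrak{g}_1$ be a finite-dimensional Lie superalgebra whose even part is $\mathfrak{sl}(2,k)$, and suppose the odd part $\mathfrak{g}_1$, as a representation of $\mathfrak{sl}(2,k)$, contains an irreducible submodule of dimension strictly greater than 3. Then $\{\mathfrak{g}_1, \mathfrak{g}_1\} = \{0\}$. -/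
lemma commutator_pow_eq_smul {R A : Type*} [CommRing R] [Ring A] [Algebra R A]
    {a n : A} {c : R} (h : a * n - n * a = c • n) (i : ℕ) :
    a * n ^ i - n ^ i * a = (i * c) • n ^ i := by
  induction i with
  | zero => simp
  | succ i ih =>
    have leibniz : a * n ^ (i + 1) - n ^ (i + 1) * a
        = (a * n ^ i - n ^ i * a) * n + n ^ i * (a * n - n * a) := by
      simp only [pow_succ]
      noncomm_ring
    rw [leibniz, ih, h, smul_mul_assoc, mul_smul_comm, ← pow_succ, ← add_smul]
    push_cast
    ring_nf

lemma Module.End.isNilpotent_of_commutator_eq_smul {k V : Type*} [Field k] [CharZero k]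
    [AddCommGroup V] [Module k V] [FiniteDimensional k V] {a n : Module.End k V} {c : k}
    (hc : c ≠ 0) (h : a * n - n * a = c • n) : IsNilpotent n := by
  by_contra hn
  -- otherwise the powers `n ^ i` are eigenvectors of `ad a` for the distinct eigenvalues `i * c`
  refine Module.Finite.not_linearIndependent_of_infinite (R := k) (fun i : ℕ => n ^ i)
    (Module.End.eigenvectors_linearIndependent' (LinearMap.mulLeft k a - LinearMap.mulRight k a)
      (fun i : ℕ => (i : k) * c) ?_ _ fun i => ⟨?_, fun h0 => hn ⟨i, h0⟩⟩)
  · exact fun i j hij => Nat.cast_injective (mul_right_cancel₀ hc hij)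
  · rw [Module.End.mem_eigenspace_iff]
    exact commutator_pow_eq_smul h i

lemma natCast_add_one_mul_sub_ne_zero {k : Type*} [Field k] [CharZero k] {i n : ℕ} (hi : i < n) :
    ((i : k) + 1) * ((n : k) - i) ≠ 0 :=
  mul_ne_zero (Nat.cast_add_one_ne_zero i) (sub_ne_zero.mpr (Nat.cast_injective.ne hi.ne'))

lemma eq_zero_of_add_self_eq_zero {k M : Type*} [Field k] [CharZero k] [AddCommGroup M]
    [Module k M] {x : M} (hx : x + x = 0) : x = 0 :=
  (smul_eq_zero.mp ((two_smul k x).trans hx)).resolve_left two_ne_zero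

namespace IsSl2Triple

open LieModule

variable {k L M : Type*} [Field k] [CharZero k] [LieRing L] [LieAlgebra k L]
  [AddCommGroup M] [Module k M] [LieRingModule L M] [LieModule k L M] {h e f : L}

lemma isNilpotent_toEnd_e [FiniteDimensional k M] (t : IsSl2Triple h e f) :
    IsNilpotent (toEnd k L M e) :=
  Module.End.isNilpotent_of_commutator_eq_smul (a := toEnd k L M h) two_ne_zero <|
    LinearMap.ext fun v => by simp [← lie_lie, t.lie_h_e_smul k]

lemma lie_h_pow_toEnd_f_apply (t : IsSl2Triple h e f) (v : M) (n : ℕ) :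
    ⁅h, (toEnd k L M f ^ n) v⁆
      = (toEnd k L M f ^ n) ⁅h, v⁆ - (2 * n : k) • (toEnd k L M f ^ n) v := by
  induction n with
  | zero => simp
  | succ n ih =>
    simp only [pow_succ', Module.End.mul_apply, toEnd_apply_apply]
    rw [leibniz_lie h, t.lie_lie_smul_f k, ih, lie_sub, lie_smul, neg_lie, smul_lie]
    push_cast
    module

lemma lie_e_pow_succ_toEnd_f_of_lie_e_eq_zero (t : IsSl2Triple h e f) {v : M} (hv : ⁅e, v⁆ = 0)
    (n : ℕ) :
    ⁅e, (toEnd k L M f ^ (n + 1)) v⁆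
      = ((n : k) + 1) • (toEnd k L M f ^ n) (⁅h, v⁆ - (n : k) • v) := by
  induction n with
  | zero => simp [leibniz_lie e, t.lie_e_f, hv]
  | succ n ih =>
    rw [pow_succ' _ (n + 1), Module.End.mul_apply, toEnd_apply_apply, leibniz_lie e, t.lie_e_f,
      ih, lie_h_pow_toEnd_f_apply t, lie_smul]
    simp only [pow_succ', Module.End.mul_apply, toEnd_apply_apply, map_sub, map_smul, lie_sub,
      lie_smul]
    push_cast
    module

lemma exists_hasPrimitiveVectorWith_nat_of_pow_toEnd_f_eq_zero (t : IsSl2Triple h e f) (n : ℕ) :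
    ∀ v : M, v ≠ 0 → ⁅e, v⁆ = 0 → (toEnd k L M f ^ n) v = 0 →
      ∃ (i : ℕ) (u : M), t.HasPrimitiveVectorWith u (i : k) := by
  induction n with
  | zero => exact fun v hv _ hfv => absurd hfv hv
  | succ n ih =>
    intro v hv hev hfv
    by_cases hv' : ⁅h, v⁆ - (n : k) • v = 0
    · exact ⟨n, v, hv, sub_eq_zero.mp hv', hev⟩
    refine ih _ hv' ?_ ?_
    · rw [lie_sub, lie_smul, hev, smul_zero, sub_zero, leibniz_lie, ← lie_skew, t.lie_h_e_smul k,
        hev, lie_zero, add_zero, neg_lie, smul_lie, hev, smul_zero, neg_zero]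
    · have hlie := t.lie_e_pow_succ_toEnd_f_of_lie_e_eq_zero (k := k) hev n
      rw [hfv, lie_zero, eq_comm, smul_eq_zero] at hlie
      exact hlie.resolve_left (Nat.cast_add_one_ne_zero n)

lemma exists_hasPrimitiveVectorWith_nat [FiniteDimensional k M] [Nontrivial M]
    (t : IsSl2Triple h e f) : ∃ (n : ℕ) (m : M), t.HasPrimitiveVectorWith m (n : k) := by
  obtain ⟨x, hx⟩ := exists_ne (0 : M)
  obtain ⟨d, hd⟩ := t.isNilpotent_toEnd_e (k := k) (M := M)
  obtain ⟨i, hi, hi'⟩ := Nat.exists_not_and_succ_of_not_zero_of_exists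
    (p := fun i => (toEnd k L M e ^ i) x = 0) (by simpa using hx) ⟨d, by simp [hd]⟩
  obtain ⟨d', hd'⟩ := t.symm.isNilpotent_toEnd_e (k := k) (M := M)
  refine t.exists_hasPrimitiveVectorWith_nat_of_pow_toEnd_f_eq_zero d' _ hi ?_ (by simp [hd'])
  rwa [pow_succ', Module.End.mul_apply, toEnd_apply_apply] at hi'

end IsSl2Triple

lemma IsSl2Triple.HasPrimitiveVectorWith.coe_lieSubmodule {R L M : Type*} [CommRing R]
    [LieRing L] [AddCommGroup M] [Module R M] [LieRingModule L M] {h e f : L}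
    {t : IsSl2Triple h e f} {W : LieSubmodule R L M} {m : W} {μ : R}
    (hm : t.HasPrimitiveVectorWith m μ) : t.HasPrimitiveVectorWith (m : M) μ where
  ne_zero := by simpa using hm.ne_zero
  lie_h := by rw [← LieSubmodule.coe_bracket, hm.lie_h, LieSubmodule.coe_smul]
  lie_e := by rw [← LieSubmodule.coe_bracket, hm.lie_e, LieSubmodule.coe_zero]

namespace IsSl2Triple.HasPrimitiveVectorWith

open LieModule

variable {k L M : Type*} [Field k] [CharZero k] [LieRing L] [LieAlgebra k L]
  [AddCommGroup M] [Module k M] [LieRingModule L M] [LieModule k L M] {h e f : L}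
  {t : IsSl2Triple h e f} {m : M} {n : ℕ}

local notation "ψ " i => ((toEnd k L M f) ^ i) m

lemma pow_toEnd_f_eq_zero_of_lt [IsNoetherian k M] (hm : t.HasPrimitiveVectorWith m (n : k))
    {i : ℕ} (hi : n < i) : (ψ i) = 0 := by
  obtain ⟨d, rfl⟩ := Nat.exists_eq_add_of_lt hi
  rw [show n + d + 1 = d + (n + 1) by ring, pow_add, Module.End.mul_apply,
    hm.pow_toEnd_f_eq_zero_of_eq_nat rfl, map_zero]

lemma eq_zero_of_smul_add_smul_eq_zero (hm : t.HasPrimitiveVectorWith m (n : k)) {p q : ℕ}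
    (hp : p ≤ n) (hpq : p ≠ q) {α β : k} (hαβ : α • (ψ p) + β • (ψ q) = 0) : α = 0 := by
  have hlie := congr_arg (⁅h, ·⁆) hαβ
  simp only [lie_add, lie_smul, hm.lie_h_pow_toEnd_f, lie_zero, smul_smul] at hlie
  have key : (α * (2 * ((q : k) - p))) • (ψ p) = 0 := by
    linear_combination (norm := module) hlie - ((n : k) - 2 * q) • hαβ
  have hqp : (2 * ((q : k) - p)) ≠ 0 :=
    mul_ne_zero two_ne_zero (sub_ne_zero.mpr (Nat.cast_injective.ne hpq.symm))
  exact (mul_eq_zero.mp ((smul_eq_zero.mp key).resolve_right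
    (hm.pow_toEnd_f_ne_zero_of_eq_nat rfl hp))).resolve_right hqp

end IsSl2Triple.HasPrimitiveVectorWith

namespace sl2

open LieModule Module

variable (k : Type*) [Field k]

def e : sl2 k := ⟨!![0, 1; 0, 0], LinearMap.mem_ker.mpr (by simp [Matrix.trace_fin_two])⟩
def h : sl2 k := ⟨!![1, 0; 0, -1], LinearMap.mem_ker.mpr (by simp [Matrix.trace_fin_two])⟩
def f : sl2 k := ⟨!![0, 0; 1, 0], LinearMap.mem_ker.mpr (by simp [Matrix.trace_fin_two])⟩

variable {k}

lemma val_one_one (X : sl2 k) : X.val 1 1 = -X.val 0 0 := by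
  have hX : X.val.trace = 0 := X.2
  rw [Matrix.trace_fin_two] at hX
  linear_combination hX

lemma ext_of_entries {X Y : sl2 k} (h₀₀ : X.val 0 0 = Y.val 0 0) (h₀₁ : X.val 0 1 = Y.val 0 1)
    (h₁₀ : X.val 1 0 = Y.val 1 0) : X = Y := by
  apply Subtype.ext
  rw [Matrix.eta_fin_two X.val, Matrix.eta_fin_two Y.val, val_one_one, val_one_one, h₀₀, h₀₁, h₁₀]

lemma eq_smul_e_add_smul_h_add_smul_f (X : sl2 k) :
    X = X.val 0 1 • e k + X.val 0 0 • h k + X.val 1 0 • f k := by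
  apply ext_of_entries <;> simp [e, h, f]

variable (k) in
lemma isSl2Triple : IsSl2Triple (h k) (e k) (f k) where
  h_ne_zero hh := by simpa [h] using congr_arg (fun X : sl2 k => X.val 0 0) hh
  lie_e_f := by
    apply ext_of_entries <;> simp [e, h, f, Ring.lie_def]
  lie_h_e_nsmul := by
    apply ext_of_entries <;> norm_num [e, h, Ring.lie_def]
  lie_h_f_nsmul := by
    apply ext_of_entries <;> norm_num [f, h, Ring.lie_def]

lemma lie_h_eq_smul_e_sub_smul_f (X : sl2 k) :
    ⁅h k, X⁆ = (2 * X.val 0 1) • e k - (2 * X.val 1 0) • f k := by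
  conv_lhs => rw [eq_smul_e_add_smul_h_add_smul_f X]
  rw [lie_add, lie_add, lie_smul, lie_smul, lie_smul, (isSl2Triple k).lie_h_e_smul k,
    (isSl2Triple k).lie_lie_smul_f k, lie_self]
  module

lemma entries_of_lie_h_eq_smul {X : sl2 k} {t : k} (hX : ⁅h k, X⁆ = t • X) :
    (t = 0 ∨ X.val 0 0 = 0) ∧ (t = 2 ∨ X.val 0 1 = 0) ∧ (t = -2 ∨ X.val 1 0 = 0) := by
  rw [lie_h_eq_smul_e_sub_smul_f] at hX
  have h₀₀ := congr_arg (fun Y : sl2 k => Y.val 0 0) hX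
  have h₀₁ := congr_arg (fun Y : sl2 k => Y.val 0 1) hX
  have h₁₀ := congr_arg (fun Y : sl2 k => Y.val 1 0) hX
  refine ⟨by simpa [e, f] using h₀₀, by simpa [e, f, eq_comm] using h₀₁, ?_⟩
  have h₁₀' : -(2 * X.val 1 0) = t * X.val 1 0 := by simpa [e, f] using h₁₀
  have h : (t + 2) * X.val 1 0 = 0 := by linear_combination -h₁₀'
  exact (mul_eq_zero.mp h).imp_left eq_neg_of_add_eq_zero_left

lemma eq_zero_of_lie_h_eq_smul {X : sl2 k} {t : k} (hX : ⁅h k, X⁆ = t • X) (ht₀ : t ≠ 0)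
    (ht₂ : t ≠ 2) (htn₂ : t ≠ -2) : X = 0 := by
  obtain ⟨h₀₀, h₀₁, h₁₀⟩ := entries_of_lie_h_eq_smul hX
  rw [eq_smul_e_add_smul_h_add_smul_f X, h₀₀.resolve_left ht₀, h₀₁.resolve_left ht₂,
    h₁₀.resolve_left htn₂]
  simp

variable [CharZero k]

lemma eq_smul_h_of_lie_h_eq_zero {X : sl2 k} (hX : ⁅h k, X⁆ = 0) : X = X.val 0 0 • h k := by
  obtain ⟨-, h₀₁, h₁₀⟩ := entries_of_lie_h_eq_smul (X := X) (t := 0) (by rw [hX, zero_smul])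
  conv_lhs => rw [eq_smul_e_add_smul_h_add_smul_f X, h₀₁.resolve_left (by norm_num),
    h₁₀.resolve_left (by norm_num)]
  simp

lemma eq_zero_of_lie_h_eq_neg_two_smul {X : sl2 k} (hX : ⁅h k, X⁆ = (-2 : k) • X)
    (he : ⁅e k, X⁆ = 0) : X = 0 := by
  obtain ⟨h₀₀, h₀₁, -⟩ := entries_of_lie_h_eq_smul hX
  have hXf : X = X.val 1 0 • f k := by
    conv_lhs => rw [eq_smul_e_add_smul_h_add_smul_f X, h₀₀.resolve_left (by norm_num),
      h₀₁.resolve_left (by norm_num)]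
    simp
  rw [hXf, lie_smul, (isSl2Triple k).lie_e_f, smul_eq_zero] at he
  rw [hXf, he.resolve_right (isSl2Triple k).h_ne_zero, zero_smul]

variable {M : Type*} [AddCommGroup M] [Module k M] [LieRingModule (sl2 k) M]
  [LieModule k (sl2 k) M] {m : M} {n : ℕ}

local notation "ψ " i => ((toEnd k (sl2 k) M (f k)) ^ i) m

lemma eq_smul_e_of_lie_eq_zero (hm : (isSl2Triple k).HasPrimitiveVectorWith m (n : k))
    (hn : n ≠ 0) {X : sl2 k} (hX : ⁅X, m⁆ = 0) : X = X.val 0 1 • e k := by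
  have hcomb : (X.val 0 0 * n) • (ψ 0) + X.val 1 0 • (ψ 1) = 0 := by
    rw [← hX]
    conv_rhs => rw [eq_smul_e_add_smul_h_add_smul_f X]
    simp [hm.lie_e, hm.lie_h, smul_smul]
  have hb : X.val 0 0 = 0 := (mul_eq_zero.mp (hm.eq_zero_of_smul_add_smul_eq_zero n.zero_le
    zero_ne_one hcomb)).resolve_right (Nat.cast_ne_zero.mpr hn)
  have hc : X.val 1 0 = 0 := hm.eq_zero_of_smul_add_smul_eq_zero (Nat.one_le_iff_ne_zero.mpr hn)
    one_ne_zero ((add_comm _ _).trans hcomb)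
  conv_lhs => rw [eq_smul_e_add_smul_h_add_smul_f X, hb, hc]
  simp

lemma eq_smul_f_of_lie_pow_eq_zero [IsNoetherian k M]
    (hm : (isSl2Triple k).HasPrimitiveVectorWith m (n : k)) (hn : n ≠ 0) {X : sl2 k}
    (hX : ⁅X, ψ n⁆ = 0) : X = X.val 1 0 • f k := by
  obtain ⟨n, rfl⟩ := Nat.exists_eq_succ_of_ne_zero hn
  have hcomb :
      (X.val 0 1 * ((n : k) + 1)) • (ψ n) + (-(X.val 0 0 * ((n : k) + 1))) • (ψ (n + 1)) = 0 := by
    rw [← hX]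
    conv_rhs => rw [eq_smul_e_add_smul_h_add_smul_f X]
    simp only [add_lie, smul_lie, hm.lie_e_pow_succ_toEnd_f, hm.lie_h_pow_toEnd_f,
      hm.lie_f_pow_toEnd_f, hm.pow_toEnd_f_eq_zero_of_eq_nat rfl, smul_zero, add_zero, smul_smul]
    push_cast
    module
  have ha : X.val 0 1 = 0 := (mul_eq_zero.mp (hm.eq_zero_of_smul_add_smul_eq_zero
    n.le_succ (Nat.succ_ne_self n).symm hcomb)).resolve_right (Nat.cast_add_one_ne_zero n)
  have hb : X.val 0 0 = 0 := by
    simpa [Nat.cast_add_one_ne_zero n] using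
      hm.eq_zero_of_smul_add_smul_eq_zero le_rfl (Nat.succ_ne_self n) ((add_comm _ _).trans hcomb)
  conv_lhs => rw [eq_smul_e_add_smul_h_add_smul_f X, ha, hb]
  simp

lemma eq_zero_of_lie_smul_e_pow_eq_zero (hm : (isSl2Triple k).HasPrimitiveVectorWith m (n : k))
    {a : k} {i : ℕ} (hi : i < n) (ha : ⁅a • e k, ψ (i + 1)⁆ = 0) : a = 0 := by
  rw [smul_lie, hm.lie_e_pow_succ_toEnd_f, smul_smul, smul_eq_zero] at ha
  exact (mul_eq_zero.mp (ha.resolve_right (hm.pow_toEnd_f_ne_zero_of_eq_nat rfl hi.le)))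
    |>.resolve_right (natCast_add_one_mul_sub_ne_zero hi)

lemma pow_toEnd_f_mem_span [IsNoetherian k M]
    (hm : (isSl2Triple k).HasPrimitiveVectorWith m (n : k)) (i : ℕ) :
    (ψ i) ∈ Submodule.span k (Set.range fun i : Fin (n + 1) => ψ (i : ℕ)) := by
  rcases le_or_gt i n with hi | hi
  · exact Submodule.subset_span ⟨⟨i, Nat.lt_succ_of_le hi⟩, rfl⟩
  · rw [hm.pow_toEnd_f_eq_zero_of_lt hi]
    exact zero_mem _

lemma lie_pow_toEnd_f_mem_span [IsNoetherian k M]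
    (hm : (isSl2Triple k).HasPrimitiveVectorWith m (n : k)) (X : sl2 k) (i : ℕ) :
    ⁅X, ψ i⁆ ∈ Submodule.span k (Set.range fun i : Fin (n + 1) => ψ (i : ℕ)) := by
  rw [eq_smul_e_add_smul_h_add_smul_f X, add_lie, add_lie, smul_lie, smul_lie, smul_lie,
    hm.lie_h_pow_toEnd_f, hm.lie_f_pow_toEnd_f]
  refine add_mem (add_mem (Submodule.smul_mem _ _ ?_)
    (Submodule.smul_mem _ _ (Submodule.smul_mem _ _ (pow_toEnd_f_mem_span hm i))))
    (Submodule.smul_mem _ _ (pow_toEnd_f_mem_span hm (i + 1)))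
  cases i with
  | zero => simp [hm.lie_e]
  | succ i =>
    rw [hm.lie_e_pow_succ_toEnd_f]
    exact Submodule.smul_mem _ _ (pow_toEnd_f_mem_span hm i)

lemma exists_hasPrimitiveVectorWith_finrank_le (V : Type*) [AddCommGroup V] [Module k V]
    [LieRingModule (sl2 k) V] [LieModule k (sl2 k) V] [FiniteDimensional k V]
    [IsIrreducible k (sl2 k) V] :
    ∃ (n : ℕ) (m : V),
      (isSl2Triple k).HasPrimitiveVectorWith m (n : k) ∧ finrank k V ≤ n + 1 := by
  have := nontrivial_of_isIrreducible k (sl2 k) V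
  obtain ⟨n, m, hm⟩ := (isSl2Triple k).exists_hasPrimitiveVectorWith_nat (k := k) (M := V)
  set S :=
    Submodule.span k (Set.range fun i : Fin (n + 1) => ((toEnd k (sl2 k) V (f k)) ^ (i : ℕ)) m)
  have hS (X : sl2 k) : S ≤ S.comap (toEnd k (sl2 k) V X) :=
    Submodule.span_le.mpr (by rintro _ ⟨i, rfl⟩; exact lie_pow_toEnd_f_mem_span hm X i)
  let N : LieSubmodule k (sl2 k) V := { S with lie_mem := fun {X} _ hv => hS X hv }
  have hmN : m ∈ N := Submodule.subset_span ⟨0, by simp⟩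
  have hN : N = ⊤ := (IsSimpleOrder.eq_bot_or_eq_top N).resolve_left fun hbot =>
    hm.ne_zero ((LieSubmodule.mem_bot m).mp (hbot ▸ hmN))
  have hS_top : S = ⊤ := congr_arg LieSubmodule.toSubmodule hN
  refine ⟨n, m, hm, ?_⟩
  calc finrank k V = finrank k S := by rw [hS_top, finrank_top]
    _ ≤ n + 1 := (finrank_range_le_card _).trans_eq (Fintype.card_fin _)

lemma eq_zero_of_lie_pow_add_lie_pow_eq_zero [IsNoetherian k M]
    (hm : (isSl2Triple k).HasPrimitiveVectorWith m (n : k)) (hn₀ : n ≠ 0) (hn₂ : n ≠ 2)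
    {φ : ℕ → sl2 k} (hφ : ∀ p q, ⁅φ p, ψ q⁆ + ⁅φ q, ψ p⁆ = 0) {i : ℕ} (hi : i ≤ n) :
    φ i = 0 := by
  have hself (p : ℕ) : ⁅φ p, ψ p⁆ = 0 := eq_zero_of_add_self_eq_zero (k := k) (hφ p p)
  have hφ₀ : φ 0 = 0 := by
    have hφ₀e := eq_smul_e_of_lie_eq_zero hm hn₀ (X := φ 0) (by simpa using hself 0)
    obtain ⟨n, rfl⟩ := Nat.exists_eq_succ_of_ne_zero hn₀
    have hcross := hφ 0 (n + 1)
    rw [hφ₀e, eq_smul_f_of_lie_pow_eq_zero hm hn₀ (hself (n + 1)), smul_lie, smul_lie,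
      hm.lie_e_pow_succ_toEnd_f, hm.lie_f_pow_toEnd_f, smul_smul] at hcross
    have ha := hm.eq_zero_of_smul_add_smul_eq_zero n.le_succ (by omega) hcross
    rw [hφ₀e, (mul_eq_zero.mp ha).resolve_right (natCast_add_one_mul_sub_ne_zero n.lt_succ_self),
      zero_smul]
  have hφi : φ i = (φ i).val 0 1 • e k :=
    eq_smul_e_of_lie_eq_zero hm hn₀ (by simpa [hφ₀] using hφ i 0)
  cases i with
  | zero => exact hφ₀
  | succ i =>
    have hselfi := hself (i + 1)
    rw [hφi] at hselfi
    rw [hφi, eq_zero_of_lie_smul_e_pow_eq_zero hm hi hselfi, zero_smul]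

end sl2

/-- The bracket `{·,·} : 𝔤₁ × 𝔤₁ → 𝔤₀` of a Lie superalgebra `𝔤 = 𝔤₀ ⊕ 𝔤₁` with `𝔤₀ = sl(2,k)`
and `𝔤₁ = M`: graded antisymmetry and the super Jacobi identities with two or three odd arguments.
-/
structure IsOddBracket {k M : Type*} [Field k] [AddCommGroup M] [Module k M]
    [LieRingModule (sl2 k) M] (P : M →ₗ[k] M →ₗ[k] sl2 k) : Prop where
  symm : ∀ u v, P u v = P v u
  jacobi : ∀ u v w, ⁅P u v, w⁆ + ⁅P v w, u⁆ + ⁅P w u, v⁆ = 0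
  lie_apply : ∀ (x : sl2 k) u v, ⁅x, P u v⁆ = P ⁅x, u⁆ v + P u ⁅x, v⁆

namespace IsOddBracket

open LieModule sl2

variable {k : Type*} [Field k] {M : Type*} [AddCommGroup M] [Module k M]
  [LieRingModule (sl2 k) M] [LieModule k (sl2 k) M] {P : M →ₗ[k] M →ₗ[k] sl2 k} {m : M} {n : ℕ}

local notation "ψ " i => ((toEnd k (sl2 k) M (f k)) ^ i) m

lemma lie_h_apply_pow (hP : IsOddBracket P)
    (hm : (isSl2Triple k).HasPrimitiveVectorWith m (n : k)) {i l : ℕ} {d : ℤ}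
    (hd : (n : ℤ) - i - l = d) :
    ⁅h k, P (ψ i) (ψ l)⁆ = (2 * d : k) • P (ψ i) (ψ l) := by
  rw [hP.lie_apply, hm.lie_h_pow_toEnd_f, hm.lie_h_pow_toEnd_f, map_smul, LinearMap.smul_apply,
    map_smul, ← add_smul, ← hd]
  push_cast
  ring_nf

lemma lie_f_apply_pow (hP : IsOddBracket P) (i l : ℕ) :
    ⁅f k, P (ψ i) (ψ l)⁆ = P (ψ (i + 1)) (ψ l) + P (ψ i) (ψ (l + 1)) := by
  simp only [hP.lie_apply, pow_succ', Module.End.mul_apply, toEnd_apply_apply]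

lemma lie_e_apply_pow_succ (hP : IsOddBracket P)
    (hm : (isSl2Triple k).HasPrimitiveVectorWith m (n : k)) (i l : ℕ) :
    ⁅e k, P (ψ (i + 1)) (ψ (l + 1))⁆ = (((i : k) + 1) * (n - i)) • P (ψ i) (ψ (l + 1))
      + (((l : k) + 1) * (n - l)) • P (ψ (i + 1)) (ψ l) := by
  rw [hP.lie_apply, hm.lie_e_pow_succ_toEnd_f, hm.lie_e_pow_succ_toEnd_f, map_smul,
    LinearMap.smul_apply, map_smul]

lemma lie_e_apply_zero_pow_succ (hP : IsOddBracket P)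
    (hm : (isSl2Triple k).HasPrimitiveVectorWith m (n : k)) (l : ℕ) :
    ⁅e k, P (ψ 0) (ψ (l + 1))⁆ = (((l : k) + 1) * (n - l)) • P (ψ 0) (ψ l) := by
  rw [hP.lie_apply, hm.lie_e_pow_succ_toEnd_f, pow_zero, Module.End.one_apply, hm.lie_e, map_zero,
    LinearMap.zero_apply, zero_add, map_smul]

variable [CharZero k]

lemma apply_pow_pow_eq_zero_of_weight (hP : IsOddBracket P)
    (hm : (isSl2Triple k).HasPrimitiveVectorWith m (n : k)) {i l : ℕ}
    (hil : i + l + 2 ≤ n ∨ n + 2 ≤ i + l) : P (ψ i) (ψ l) = 0 := by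
  have hweight (c : ℤ) (hc : 2 * ((n : ℤ) - i - l) ≠ c) :
      (2 * (((n : ℤ) - i - l : ℤ) : k)) ≠ c := by
    exact_mod_cast hc
  refine eq_zero_of_lie_h_eq_smul (hP.lie_h_apply_pow hm rfl) ?_ ?_ ?_
  · simpa using hweight 0 (by omega)
  · simpa using hweight 2 (by omega)
  · simpa using hweight (-2) (by omega)

lemma apply_zero_pow_eq_zero (hP : IsOddBracket P)
    (hm : (isSl2Triple k).HasPrimitiveVectorWith m (n : k)) (hn : 2 ≤ n) :
    P (ψ 0) (ψ n) = 0 := by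
  have hweight := hP.lie_h_apply_pow hm (i := 0) (l := n) (d := 0) (by simp)
  have h₀₀ := hP.apply_pow_pow_eq_zero_of_weight hm (i := 0) (l := 0) (Or.inl (by omega))
  simp only [pow_zero, Module.End.one_apply, Int.cast_zero, mul_zero, zero_smul] at hweight h₀₀ ⊢
  have hX := eq_smul_h_of_lie_h_eq_zero hweight
  have hjac := hP.jacobi m m (ψ n)
  rw [h₀₀, zero_lie, zero_add, hP.symm (ψ n)] at hjac
  have hlie := eq_zero_of_add_self_eq_zero (k := k) hjac
  rw [hX, smul_lie, hm.lie_h, smul_smul, smul_eq_zero] at hlie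
  rw [hX, (mul_eq_zero.mp (hlie.resolve_right hm.ne_zero)).resolve_right
    (Nat.cast_ne_zero.mpr (by omega)), zero_smul]

lemma apply_pow_pow_eq_zero_of_add_eq (hP : IsOddBracket P)
    (hm : (isSl2Triple k).HasPrimitiveVectorWith m (n : k)) (hn : 2 ≤ n) (i : ℕ) :
    (∀ l, i + l = n → P (ψ i) (ψ l) = 0) ∧ (∀ l, i + l + 1 = n → P (ψ i) (ψ l) = 0) := by
  induction i with
  | zero =>
    have hseed := hP.apply_zero_pow_eq_zero hm hn
    refine ⟨fun l hl => by rwa [show l = n by omega], fun l hl => ?_⟩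
    have hlie := hP.lie_e_apply_zero_pow_succ hm l
    rw [show l + 1 = n by omega, hseed, lie_zero, eq_comm, smul_eq_zero] at hlie
    exact hlie.resolve_left (natCast_add_one_mul_sub_ne_zero (by omega))
  | succ i ih =>
    have hlevel (l : ℕ) (hl : i + 1 + l = n) : P (ψ (i + 1)) (ψ l) = 0 := by
      have hlie := hP.lie_f_apply_pow (m := m) i l
      rw [ih.2 l (by omega), lie_zero, ih.1 (l + 1) (by omega), add_zero] at hlie
      exact hlie.symm
    refine ⟨hlevel, fun l hl => ?_⟩
    have hlie := hP.lie_e_apply_pow_succ hm i l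
    rw [hlevel (l + 1) (by omega), lie_zero, ih.2 (l + 1) (by omega), smul_zero, zero_add,
      eq_comm, smul_eq_zero] at hlie
    exact hlie.resolve_left (natCast_add_one_mul_sub_ne_zero (by omega))

lemma apply_pow_pow_eq_zero_of_add_eq_succ [IsNoetherian k M] (hP : IsOddBracket P)
    (hm : (isSl2Triple k).HasPrimitiveVectorWith m (n : k)) (hn : 2 ≤ n) {i l : ℕ}
    (hil : i + l = n + 1) : P (ψ i) (ψ l) = 0 := by
  rcases i with _ | i
  · rw [hm.pow_toEnd_f_eq_zero_of_lt (by omega : n < l), map_zero]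
  rcases l with _ | l
  · rw [hm.pow_toEnd_f_eq_zero_of_lt (by omega : n < i + 1), map_zero, LinearMap.zero_apply]
  refine eq_zero_of_lie_h_eq_neg_two_smul ?_ ?_
  · simpa using hP.lie_h_apply_pow hm (i := i + 1) (l := l + 1) (d := -1) (by push_cast; omega)
  · rw [hP.lie_e_apply_pow_succ hm,
      (hP.apply_pow_pow_eq_zero_of_add_eq hm hn i).1 (l + 1) (by omega),
      (hP.apply_pow_pow_eq_zero_of_add_eq hm hn (i + 1)).1 l (by omega), smul_zero, smul_zero,
      add_zero]

lemma apply_pow_pow_eq_zero [IsNoetherian k M] (hP : IsOddBracket P)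
    (hm : (isSl2Triple k).HasPrimitiveVectorWith m (n : k)) (hn : 2 ≤ n) (i l : ℕ) :
    P (ψ i) (ψ l) = 0 := by
  rcases (by omega : (i + l + 2 ≤ n ∨ n + 2 ≤ i + l) ∨ i + l = n ∨ i + l + 1 = n ∨ i + l = n + 1)
    with hil | hil | hil | hil
  · exact hP.apply_pow_pow_eq_zero_of_weight hm hil
  · exact (hP.apply_pow_pow_eq_zero_of_add_eq hm hn i).1 l hil
  · exact (hP.apply_pow_pow_eq_zero_of_add_eq hm hn i).2 l hil
  · exact hP.apply_pow_pow_eq_zero_of_add_eq_succ hm hn hil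

lemma apply_pow_eq_zero [IsNoetherian k M] (hP : IsOddBracket P)
    (hm : (isSl2Triple k).HasPrimitiveVectorWith m (n : k)) (hn : 3 ≤ n) (i : ℕ) (v : M) :
    P (ψ i) v = 0 := by
  rcases le_or_gt i n with hi | hi
  · refine eq_zero_of_lie_pow_add_lie_pow_eq_zero hm (by omega) (by omega)
      (φ := fun p => P (ψ p) v) (fun p q => ?_) hi
    have hjac := hP.jacobi (ψ q) (ψ p) v
    rwa [hP.apply_pow_pow_eq_zero hm (by omega), zero_lie, zero_add, hP.symm v] at hjac
  · rw [hm.pow_toEnd_f_eq_zero_of_lt hi, map_zero, LinearMap.zero_apply]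

theorem eq_zero [IsNoetherian k M] (hP : IsOddBracket P)
    (hm : (isSl2Triple k).HasPrimitiveVectorWith m (n : k)) (hn : 3 ≤ n) (u v : M) :
    P u v = 0 := by
  have hlie (i : ℕ) : ⁅P u v, ψ i⁆ = 0 := by
    have hjac := hP.jacobi u v (ψ i)
    rwa [hP.symm v, hP.apply_pow_eq_zero hm hn, hP.apply_pow_eq_zero hm hn, zero_lie, zero_lie,
      add_zero, add_zero] at hjac
  have hX := eq_smul_e_of_lie_eq_zero hm (by omega) (by simpa using hlie 0)
  have hX₁ := hlie 1
  rw [hX] at hX₁ ⊢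
  rw [eq_zero_of_lie_smul_e_pow_eq_zero hm (i := 0) (by omega) hX₁, zero_smul]

end IsOddBracket

/-- Over a field of characteristic zero, let `𝔤 = sl(2,k) ⊕ 𝔤₁` be a
finite-dimensional Lie superalgebra (encoded by the action of `sl(2,k)` on `𝔤₁` and the
symmetric bilinear map `P = {·,·}|_{𝔤₁×𝔤₁}` satisfying relations (1) and (2)). If `𝔤₁`
contains an irreducible submodule of dimension strictly greater than 3, then
`{𝔤₁, 𝔤₁} = 0`. -/
theorem stmt_15 (k g1 : Type*) [Field k] [CharZero k]
    [AddCommGroup g1] [Module k g1] [LieRingModule (sl2 k) g1] [LieModule k (sl2 k) g1]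
    [FiniteDimensional k g1]
    (P : g1 →ₗ[k] g1 →ₗ[k] sl2 k) (hPsymm : ∀ u v : g1, P u v = P v u)
    (h1 : ∀ u v w : g1, ⁅P u v, w⁆ + ⁅P v w, u⁆ + ⁅P w u, v⁆ = 0)
    (h2 : ∀ (x : sl2 k) (u v : g1), ⁅x, P u v⁆ = P ⁅x, u⁆ v + P u ⁅x, v⁆)
    (W : LieSubmodule k (sl2 k) g1)
    (hWirr : LieModule.IsIrreducible k (sl2 k) ↥W)
    (hWdim : 3 < Module.finrank k ↥W) :
    ∀ u v : g1, P u v = 0 := by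
  obtain ⟨n, m, hm, hdim⟩ := sl2.exists_hasPrimitiveVectorWith_finrank_le (k := k) W
  exact IsOddBracket.eq_zero ⟨hPsymm, h1, h2⟩ hm.coe_lieSubmodule (by omega)
end

section
/- Let $k$ be a field of characteristic not 2 or 3, and let $\mathfrak{g}$ and $\mathfrak{g}'$ be Lie algebras over $k$ with an isomorphism $\phi : \mathfrak{g} \to \mathfrak{g}'$. Set $\mathcal{Z}_{\mathfrak{g}}(\mathfrak{g}') = \{f \in \mathrm{Hom}(\mathfrak{g},\mathfrak{g}') : f \circ \mathrm{ad}(x) = \mathrm{ad}(\phi(x)) \circ f \ \forall x \in \mathfrak{g}\}$. Define $\tilde{\mathfrak{g}} = \mathfrak{g} \oplus (\mathfrak{g}' \oplus \mathcal{Z}_{\mathfrak{g}}(\mathfrak{g}'))$ with even part $\mathfrak{g}$, odd part $\mathfrak{g}' \oplus \mathcal{Z}_{\mathfrak{g}}(\mathfrak{g}')$, and bracket given by: the Lie bracket on $\mathfrak{g}$; $\{x,v\} = [\phi(x),v]$ for $x \in \mathfrak{g}$, $v \in \mathfrak{g}'$; $\{x,f\} = 0$ for $f \in \mathcal{Z}_{\mathfrak{g}}(\mathfrak{g}')$;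 $\{v,w\} = \{f,g\} = 0$ for $v,w \in \mathfrak{g}'$, $f,g \in \mathcal{Z}_{\mathfrak{g}}(\mathfrak{g}')$; and $\{v,f\} = \phi^{-1}(f(\phi^{-1}(v)))$. Then $\tilde{\mathfrak{g}}$ is a Lie superalgebra. -/
/-!
Write odd elements as `(φ a, f)`. The centroid condition, read through the antisymmetry of the
bracket, says `⁅f a, φ b⁆ = f ⁅a, b⁆`; hence in the cyclic sum of identity (1) the six terms
cancel in pairs `f ⁅a, b⁆ + f ⁅b, a⁆ = 0`. Identity (2) holds because each `φ⁻¹ ∘ f ∘ φ⁻¹`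
intertwines `ad (φ x)` on `𝔤'` with `ad x` on `𝔤`.
-/

section

variable {k g g' : Type*} [Field k] [LieRing g] [LieAlgebra k g] [LieRing g'] [LieAlgebra k g']

/-- The space `Z_𝔤(𝔤')` of linear maps `f : 𝔤 → 𝔤'` intertwining the adjoint actions via
an isomorphism `φ : 𝔤 → 𝔤'`. -/
def centroid (φ : g ≃ₗ⁅k⁆ g') : Submodule k (g →ₗ[k] g') where
  carrier := {f | ∀ x v : g, f ⁅x, v⁆ = ⁅φ x, f v⁆}
  add_mem' := by
    intro f h hf hh x v
    simp [hf x v, hh x v]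
  zero_mem' := by
    intro x v
    simp
  smul_mem' := by
    intro c f hf x v
    simp [hf x v]

namespace centroid

variable {φ : g ≃ₗ⁅k⁆ g'} (f : centroid φ)

theorem lie_apply_map (u v : g) : ⁅f.1 u, φ v⁆ = f.1 ⁅u, v⁆ := by
  rw [← lie_skew, ← f.2 v u, ← lie_skew u v, map_neg]

theorem lie_apply_map_add_lie_apply_map (u v : g) : ⁅f.1 u, φ v⁆ + ⁅f.1 v, φ u⁆ = 0 := by
  rw [lie_apply_map, lie_apply_map, ← map_add, ← lie_skew u v, neg_add_cancel, map_zero]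

theorem symm_apply_symm_lie (x : g) (w : g') :
    φ.symm (f.1 (φ.symm ⁅φ x, w⁆)) = ⁅x, φ.symm (f.1 (φ.symm w))⁆ := by
  rw [φ.symm.map_lie, φ.symm_apply_apply, f.2, φ.symm.map_lie, φ.symm_apply_apply]

end centroid

def oddBracket (φ : g ≃ₗ⁅k⁆ g') (p q : g' × centroid φ) : g :=
  φ.symm (p.2.1 (φ.symm q.1)) + φ.symm (q.2.1 (φ.symm p.1))

theorem oddBracket_cyclic (φ : g ≃ₗ⁅k⁆ g') (p q r : g' × centroid φ) :
    ⁅φ (oddBracket φ p q), r.1⁆ + ⁅φ (oddBracket φ q r), p.1⁆ + ⁅φ (oddBracket φ r p), q.1⁆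
      = 0 := by
  rcases p with ⟨v, f⟩
  rcases q with ⟨w, h⟩
  rcases r with ⟨z, l⟩
  obtain ⟨a, rfl⟩ := φ.surjective v
  obtain ⟨b, rfl⟩ := φ.surjective w
  obtain ⟨c, rfl⟩ := φ.surjective z
  simp only [oddBracket, map_add, LieEquiv.coe_toLieHom, LieEquiv.apply_symm_apply,
    LieEquiv.symm_apply_apply, add_lie]
  calc _ = (⁅f.1 b, φ c⁆ + ⁅f.1 c, φ b⁆) + (⁅h.1 a, φ c⁆ + ⁅h.1 c, φ a⁆) +
        (⁅l.1 b, φ a⁆ + ⁅l.1 a, φ b⁆) := by abel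
    _ = 0 := by simp only [centroid.lie_apply_map_add_lie_apply_map, add_zero]

theorem lie_oddBracket (φ : g ≃ₗ⁅k⁆ g') (x : g) (p q : g' × centroid φ) :
    ⁅x, oddBracket φ p q⁆ =
      oddBracket φ (⁅φ x, p.1⁆, 0) q + oddBracket φ p (⁅φ x, q.1⁆, 0) := by
  simp only [oddBracket, centroid.symm_apply_symm_lie, lie_add, Submodule.coe_zero,
    LinearMap.zero_apply, map_zero, zero_add, add_zero]
  exact add_comm _ _

theorem stmt_16_general (φ : g ≃ₗ⁅k⁆ g') :
    let O := g' × centroid φ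
    let act : g → O → O := fun x p => (⁅φ x, p.1⁆, 0)
    let Pm : O → O → g := fun p q =>
      φ.symm (p.2.1 (φ.symm q.1)) + φ.symm (q.2.1 (φ.symm p.1))
    (∀ p q : O, Pm p q = Pm q p) ∧
    (∀ p q r : O, act (Pm p q) r + act (Pm q r) p + act (Pm r p) q = 0) ∧
    (∀ (x : g) (p q : O), ⁅x, Pm p q⁆ = Pm (act x p) q + Pm p (act x q)) := by
  intro O act Pm
  refine ⟨fun p q => add_comm _ _, fun p q r => ?_, lie_oddBracket φ⟩
  exact Prod.ext (oddBracket_cyclic φ p q r) ((add_zero _).trans (add_zero _))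

/-- Given an isomorphism `φ : 𝔤 → 𝔤'` of Lie algebras over a field of
characteristic not 2 or 3, the space `𝔤 ⊕ (𝔤' ⊕ Z_𝔤(𝔤'))` with even part `𝔤`, odd part
`𝔤' ⊕ Z_𝔤(𝔤')`, the given action and the bracket `P` described in the paper is a Lie
superalgebra: `P` is symmetric and satisfies the identities (1) and (2). -/
theorem stmt_16 (h2 : (2 : k) ≠ 0) (h3 : (3 : k) ≠ 0) (φ : g ≃ₗ⁅k⁆ g') :
    let O := g' × centroid φ
    let act : g → O → O := fun x p => (⁅φ x, p.1⁆, 0)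
    let Pm : O → O → g := fun p q =>
      φ.symm (p.2.1 (φ.symm q.1)) + φ.symm (q.2.1 (φ.symm p.1))
    (∀ p q : O, Pm p q = Pm q p) ∧
    (∀ p q r : O, act (Pm p q) r + act (Pm q r) p + act (Pm r p) q = 0) ∧
    (∀ (x : g) (p q : O), ⁅x, Pm p q⁆ = Pm (act x p) q + Pm p (act x q)) :=
  stmt_16_general φ

end
end

section
/- Let $k$ be a field of characteristic not 2 or 3, and let $\mathfrak{s}$ be a three-dimensional simple Lie algebra over $k$. Then the space $\mathcal{Z}_{\mathfrak{s}}(\mathfrak{s}) = \{f \in \mathrm{End}(\mathfrak{s}) : f \circ \mathrm{ad}(x) = \mathrm{ad}(x) \circ f \ \forall x \in \mathfrak{s}\}$ of endomorphisms commuting with the adjoint representation is one-dimensional, i.e. consists exactly of the scalar multiples of the identity. -/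
/-!
By Schur's lemma the commutant `C` of the adjoint representation of a simple Lie algebra `L` is
a division algebra over `k`, and it is commutative because `a (b ⁅x, y⁆) = ⁅a x, b y⁆ = b (a ⁅x, y⁆)`;
so `C` is a field and `L` is a `C`-vector space. The tower law gives `[C : k] ∣ dim_k L = 3`.
If `[C : k] = 3` then `L` is a line over `C`, hence abelian; so `[C : k] = 1`, i.e. `C = k`.
-/

namespace LieModule

variable (k L M : Type*) [Field k] [LieRing L] [LieAlgebra k L] [AddCommGroup M] [Module k M]
  [LieRingModule L M] [LieModule k L M]

def commutant : Subalgebra k (Module.End k M) :=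
  Subalgebra.centralizer k (Set.range (toEnd k L M))

variable {k L M}

lemma mem_commutant_iff {g : Module.End k M} :
    g ∈ commutant k L M ↔ ∀ (x : L) (m : M), g ⁅x, m⁆ = ⁅x, g m⁆ := by
  simp only [commutant, Subalgebra.mem_centralizer_iff, Set.forall_mem_range,
    LinearMap.ext_iff, Module.End.mul_apply, toEnd_apply_apply, eq_comm]

def lieModuleHomOfMemCommutant {g : Module.End k M} (hg : g ∈ commutant k L M) :
    M →ₗ⁅k,L⁆ M :=
  { g with map_lie' := mem_commutant_iff.mp hg _ _ }

variable [IsIrreducible k L M]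

lemma injective_of_mem_commutant {g : Module.End k M} (hg : g ∈ commutant k L M)
    (hg₀ : g ≠ 0) : Function.Injective g := by
  refine (eq_bot_or_eq_top (lieModuleHomOfMemCommutant hg).ker).resolve_right
    (fun h => hg₀ (LinearMap.ext fun m => ?_)) |> (LieModuleHom.ker_eq_bot _).mp
  exact LieModuleHom.mem_ker.mp (h ▸ LieSubmodule.mem_top m)

lemma surjective_of_mem_commutant {g : Module.End k M} (hg : g ∈ commutant k L M)
    (hg₀ : g ≠ 0) : Function.Surjective g := by
  refine (eq_bot_or_eq_top (lieModuleHomOfMemCommutant hg).range).resolve_left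
    (fun h => hg₀ (LinearMap.ext fun m => ?_)) |> (LieModuleHom.range_eq_top _).mp
  have : g m ∈ (lieModuleHomOfMemCommutant hg).range := ⟨m, rfl⟩
  exact (LieSubmodule.mem_bot _).mp (h ▸ this)

lemma isUnit_of_mem_commutant {g : commutant k L M} (hg₀ : g ≠ 0) : IsUnit g := by
  have hg₀' : (g : Module.End k M) ≠ 0 := fun h => hg₀ (Subtype.ext h)
  obtain ⟨u, hu⟩ := (Module.End.isUnit_iff _).mpr
    ⟨injective_of_mem_commutant g.2 hg₀', surjective_of_mem_commutant g.2 hg₀'⟩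
  have hu_inv : (↑u⁻¹ : Module.End k M) ∈ commutant k L M := fun a ha =>
    ((hu ▸ g.2 a ha : Commute a u).units_inv_right).eq
  exact ⟨⟨g, ⟨_, hu_inv⟩, Subtype.ext (by simp [← hu]), Subtype.ext (by simp [← hu])⟩, rfl⟩

end LieModule

namespace LieAlgebra

open LieModule

variable {k L : Type*} [Field k] [LieRing L] [LieAlgebra k L]

lemma apply_lie_eq_lie_apply_of_mem_commutant {g : Module.End k L} (hg : g ∈ commutant k L L)
    (x y : L) : g ⁅x, y⁆ = ⁅g x, y⁆ := by
  rw [← lie_skew, map_neg, mem_commutant_iff.mp hg, ← lie_skew, neg_neg]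

variable [IsSimple k L]

lemma commutant_mul_comm (a b : commutant k L L) : a * b = b * a := by
  obtain ⟨x, y, hxy⟩ : ∃ x y : L, ⁅x, y⁆ ≠ 0 := by
    by_contra! h
    exact IsSimple.non_abelian k (L := L) ⟨h⟩
  by_contra hne
  have hab : (↑(a * b - b * a) : Module.End k L) ≠ 0 := by
    rwa [ne_eq, ZeroMemClass.coe_eq_zero, sub_eq_zero]
  refine hxy (injective_of_mem_commutant (a * b - b * a).2 hab ?_)
  simp [apply_lie_eq_lie_apply_of_mem_commutant a.2, mem_commutant_iff.mp b.2]

lemma isField_commutant : IsField (commutant k L L) where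
  exists_pair_ne :=
    have := nontrivial_of_isIrreducible k L L
    exists_pair_ne _
  mul_comm := commutant_mul_comm
  mul_inv_cancel := fun ha => (isUnit_of_mem_commutant ha).exists_right_inv

noncomputable instance : Field (commutant k L L) := isField_commutant.toField

lemma finrank_commutant_ne_one : Module.finrank (commutant k L L) L ≠ 1 := by
  intro h
  obtain ⟨v, -, hv⟩ := finrank_eq_one_iff'.mp h
  refine IsSimple.non_abelian k (L := L) ⟨fun x y => ?_⟩
  obtain ⟨a, rfl⟩ := hv x
  obtain ⟨b, rfl⟩ := hv y
  change ⁅(a : Module.End k L) v, (b : Module.End k L) v⁆ = 0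
  rw [← apply_lie_eq_lie_apply_of_mem_commutant a.2, ← mem_commutant_iff.mp b.2, lie_self,
    map_zero, map_zero]

lemma commutant_eq_bot_of_finrank_prime (hp : (Module.finrank k L).Prime) :
    commutant k L L = ⊥ := by
  have htower := Module.finrank_mul_finrank k (commutant k L L) L
  rcases hp.eq_one_or_self_of_dvd _ (Dvd.intro _ htower) with h | h
  · exact Subalgebra.eq_bot_of_finrank_one h
  · rw [h, Nat.mul_eq_left hp.ne_zero] at htower
    exact absurd htower finrank_commutant_ne_one

end LieAlgebra

theorem stmt_17_general (k s : Type*) [Field k]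
    [LieRing s] [LieAlgebra k s] [LieAlgebra.IsSimple k s]
    (hdim : Module.finrank k s = 3) (f : s →ₗ[k] s) :
    (∀ x y : s, f ⁅x, y⁆ = ⁅x, f y⁆) ↔ ∃ c : k, f = c • LinearMap.id := by
  rw [← LieModule.mem_commutant_iff,
    LieAlgebra.commutant_eq_bot_of_finrank_prime (hdim ▸ Nat.prime_three), Algebra.mem_bot]
  simp [Module.algebraMap_end_eq_smul_id, eq_comm]

/-- For a three-dimensional simple Lie algebra `𝔰` over a field of
characteristic not 2 or 3, the space of endomorphisms commuting with the adjoint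
representation consists exactly of the scalar multiples of the identity. -/
theorem stmt_17 (k s : Type*) [Field k] (h2 : (2 : k) ≠ 0) (h3 : (3 : k) ≠ 0)
    [LieRing s] [LieAlgebra k s] [LieAlgebra.IsSimple k s] [Module.Finite k s]
    (hdim : Module.finrank k s = 3) (f : s →ₗ[k] s) :
    (∀ x y : s, f ⁅x, y⁆ = ⁅x, f y⁆) ↔ ∃ c : k, f = c • LinearMap.id :=
  stmt_17_general k s hdim f
end
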